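/- arXiv:2003.05444 — 2 statements merged into one kernel-verified Lean document; each statement's English description precedes it below -/
import Mathlib

section
/- Consider a dual-criticality sporadic task with parameters (T, D, D^L, C^L, C^H), let R be a release set for it, and let 0 ≤ t1 ≤ t2 be reals such that the task is in case 3, i.e., t2 − t1 > D − D^L and NOT (D − D^L < MOD(t2 − t1, T) < D and ⌊(t2 − t1)/T⌋·T + D ≤ t2). Then C^H · |{x ∈ R : x + D ≤ t2 and x + D^L > t1}| + C^L · |{x ∈ R : x + D ≤ t2 and x + D^L ≤ t1}| ≤ dbf^L(t1,t2) + dbf^H(t2 − t1) + C^L. (In case 3 the carry-over job completes by the switch instant t1 and contributes only C^L; this is the demand bound of Lemma 6 of the paper.) -/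
open scoped Classical
open Finset

namespace MC

/-- `MOD t T = t - ⌊t/T⌋·T`. -/
noncomputable def MOD (t T : ℝ) : ℝ := t - (⌊t / T⌋ : ℝ) * T

/-- A dual-criticality sporadic task: minimum separation `T > 0`, low-criticality WCET
`CL` and high-criticality WCET `CH` with `0 < CL ≤ CH`, real deadline `D` and tightened
deadline `DL` with `CL ≤ DL ≤ D ≤ T`. -/
structure Task where
  T : ℝ
  D : ℝ
  DL : ℝ
  CL : ℝ
  CH : ℝ
  hT : 0 < T
  hCL : 0 < CL
  hCLCH : CL ≤ CH
  hCLDL : CL ≤ DL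
  hDLD : DL ≤ D
  hDT : D ≤ T

/-- Low-criticality demand bound function `dbf^L(t)`. -/
noncomputable def dbfL (τ : Task) (t : ℝ) : ℝ :=
  max 0 (((⌊(t - τ.DL) / τ.T⌋ : ℝ) + 1) * τ.CL)

/-- High-criticality demand bound function `dbf^H(t)`. -/
noncomputable def dbfH (τ : Task) (t : ℝ) : ℝ :=
  max 0 (((⌊(t - τ.D) / τ.T⌋ : ℝ) + 1) * τ.CH)

/-- Two-parameter low-criticality demand bound `dbf^L(t1, t2)`. -/
noncomputable def dbfL2 (τ : Task) (t1 t2 : ℝ) : ℝ :=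
  max 0 ((⌊(t2 - τ.D) / τ.T⌋ : ℝ) - (⌊(t2 - t1 - τ.D) / τ.T⌋ : ℝ) - 1) * τ.CL

/-- Unnecessary-job demand bound `dbf^{UN}(t1, t2)`. -/
noncomputable def dbfUN (τ : Task) (t1 t2 : ℝ) : ℝ :=
  if MOD t1 τ.T < τ.DL ∧ (⌊t1 / τ.T⌋ : ℝ) * τ.T + τ.DL ≤ t2 then
    min τ.CL (MOD t1 τ.T)
  else 0

/-- Maximum carry-over execution `CO(t)` pending at the start of an interval of length `t`. -/
noncomputable def CO (τ : Task) (t : ℝ) : ℝ :=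
  min τ.CL (MOD t τ.T - (τ.D - τ.DL))

/-- A release set for a task: a finite set of nonnegative reals, any two distinct
elements of which differ by at least the minimum separation `T`. -/
def ReleaseSet (τ : Task) (R : Finset ℝ) : Prop :=
  (∀ x ∈ R, 0 ≤ x) ∧ ∀ x ∈ R, ∀ y ∈ R, x ≠ y → τ.T ≤ |x - y|

/-- Case 1: `t2 - t1 ≤ D - D^L`; no job of the task executes after the switch. -/
def case1 (τ : Task) (t1 t2 : ℝ) : Prop := t2 - t1 ≤ τ.D - τ.DL

/-- Case 2: the carry-over job contributes demand after the switch. -/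
def case2 (τ : Task) (t1 t2 : ℝ) : Prop :=
  τ.D - τ.DL < MOD (t2 - t1) τ.T ∧ MOD (t2 - t1) τ.T < τ.D ∧
    (⌊(t2 - t1) / τ.T⌋ : ℝ) * τ.T + τ.D ≤ t2

/-- Case 3: neither case 1 nor case 2. -/
def case3 (τ : Task) (t1 t2 : ℝ) : Prop := ¬ case1 τ t1 t2 ∧ ¬ case2 τ t1 t2

/-- Set `S(t)` of HC tasks whose carry-over job contributes demand in an interval of
length `t` (existing test). -/
noncomputable def Sset {n : ℕ} (τ : Fin n → Task) (hc : Fin n → Bool) (t : ℝ) :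
    Finset (Fin n) :=
  univ.filter fun i =>
    hc i = true ∧ (τ i).D - (τ i).DL < MOD t (τ i).T ∧ MOD t (τ i).T < (τ i).D

/-- The existing-test bound `E(t)` (Proposition 3, from Ekberg and Yi). -/
noncomputable def Etest {n : ℕ} (τ : Fin n → Task) (hc : Fin n → Bool) (t : ℝ) : ℝ :=
  ∑ i ∈ univ.filter (fun i => hc i = true), dbfH (τ i) t +
    ∑ i ∈ Sset τ hc t, (((τ i).CH - (τ i).CL) + CO (τ i) t)

/-- `U`: the set of LC tasks together with HC tasks in case 1. -/
noncomputable def Uset {n : ℕ} (τ : Fin n → Task) (hc : Fin n → Bool) (t1 t2 : ℝ) :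
    Finset (Fin n) :=
  univ.filter fun i => hc i = false ∨ case1 (τ i) t1 t2

/-- HC tasks in case 2. -/
noncomputable def H2set {n : ℕ} (τ : Fin n → Task) (hc : Fin n → Bool) (t1 t2 : ℝ) :
    Finset (Fin n) :=
  univ.filter fun i => hc i = true ∧ case2 (τ i) t1 t2

/-- HC tasks in case 3. -/
noncomputable def H3set {n : ℕ} (τ : Fin n → Task) (hc : Fin n → Bool) (t1 t2 : ℝ) :
    Finset (Fin n) :=
  univ.filter fun i => hc i = true ∧ case3 (τ i) t1 t2

/-- The new-test bound `N(t1,t2)` of Theorem 1. -/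
noncomputable def Ntest {n : ℕ} (τ : Fin n → Task) (hc : Fin n → Bool) (t1 t2 : ℝ) : ℝ :=
  ∑ i ∈ Uset τ hc t1 t2, (dbfL (τ i) t1 + dbfUN (τ i) t1 t2) +
    ∑ i ∈ H2set τ hc t1 t2, (dbfL2 (τ i) t1 t2 + dbfH (τ i) (t2 - t1) + (τ i).CH) +
    ∑ i ∈ H3set τ hc t1 t2, (dbfL2 (τ i) t1 t2 + dbfH (τ i) (t2 - t1) + (τ i).CL)

/-- Collective bound `dbf_{UN}(t1,t2)` on the demand of all unnecessary jobs (Lemma 5). -/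
noncomputable def dbfUNtot {n : ℕ} (τ : Fin n → Task) (hc : Fin n → Bool) (t1 t2 : ℝ) : ℝ :=
  if h : (Uset τ hc t1 t2).Nonempty then
    min ((Uset τ hc t1 t2).sup' h fun i => (τ i).DL)
      (∑ i ∈ Uset τ hc t1 t2, dbfUN (τ i) t1 t2)
  else 0

/-- `dbf_{L1}(t1,t2)` (Lemma 7). -/
noncomputable def dbfL1tot {n : ℕ} (τ : Fin n → Task) (hc : Fin n → Bool) (t1 t2 : ℝ) : ℝ :=
  dbfUNtot τ hc t1 t2 + ∑ i ∈ Uset τ hc t1 t2, dbfL (τ i) t1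

/-- `dbf_{L2}(t1,t2)` (Lemma 8). -/
noncomputable def dbfL2tot {n : ℕ} (τ : Fin n → Task) (hc : Fin n → Bool) (t1 t2 : ℝ) : ℝ :=
  ∑ i ∈ H2set τ hc t1 t2, (dbfL2 (τ i) t1 t2 + (τ i).CL - CO (τ i) (t2 - t1))

/-- `dbf_{L3}(t1,t2)` (Lemma 9). -/
noncomputable def dbfL3tot {n : ℕ} (τ : Fin n → Task) (hc : Fin n → Bool) (t1 t2 : ℝ) : ℝ :=
  ∑ i ∈ H3set τ hc t1 t2, (dbfL2 (τ i) t1 t2 + (τ i).CL)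

/-- The improved-test bound `I(t1,t2)` of Theorem 2. -/
noncomputable def Itest {n : ℕ} (τ : Fin n → Task) (hc : Fin n → Bool) (t1 t2 : ℝ) : ℝ :=
  min t1 (dbfL1tot τ hc t1 t2 + dbfL2tot τ hc t1 t2 + dbfL3tot τ hc t1 t2) +
    (∑ i ∈ H2set τ hc t1 t2, dbfH (τ i) (t2 - t1) +
      ∑ i ∈ H3set τ hc t1 t2, dbfH (τ i) (t2 - t1)) +
    ∑ i ∈ H2set τ hc t1 t2, (CO (τ i) (t2 - t1) + (τ i).CH - (τ i).CL)


/-- Spacing bound: a finset of reals pairwise at least `T` apart contained in `[a,b]`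
has `(card - 1) * T ≤ b - a` (if nonempty). -/
lemma sep_card_bound (T : ℝ) (hT : 0 < T) :
    ∀ S : Finset ℝ, (∀ x ∈ S, ∀ y ∈ S, x ≠ y → T ≤ |x - y|) →
      ∀ a b : ℝ, (∀ x ∈ S, a ≤ x ∧ x ≤ b) → S.Nonempty →
      ((S.card : ℝ) - 1) * T ≤ b - a := by
  intro S
  induction S using Finset.strongInduction with
  | _ S ih =>
    intro hsep a b hmem hne
    by_cases h1 : S.card ≤ 1
    · obtain ⟨x, hx⟩ := hne
      have hx' := hmem x hx
      have : ((S.card : ℝ) - 1) ≤ 0 := by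
        have : (S.card : ℝ) ≤ 1 := by exact_mod_cast h1
        linarith
      nlinarith
    · push_neg at h1
      set m := S.max' hne with hm
      have hmS : m ∈ S := S.max'_mem hne
      have hsub : S.erase m ⊂ S := Finset.erase_ssubset hmS
      have hne' : (S.erase m).Nonempty := by
        rw [← Finset.card_pos, Finset.card_erase_of_mem hmS]; omega
      have hmem' : ∀ x ∈ S.erase m, a ≤ x ∧ x ≤ m - T := by
        intro x hx
        have hxS := Finset.mem_of_mem_erase hx
        have hxm : x ≠ m := Finset.ne_of_mem_erase hx
        refine ⟨(hmem x hxS).1, ?_⟩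
        have hle : x ≤ m := S.le_max' x hxS
        have habs := hsep x hxS m hmS hxm
        rw [abs_of_nonpos (by linarith)] at habs
        linarith
      have hsep' : ∀ x ∈ S.erase m, ∀ y ∈ S.erase m, x ≠ y → T ≤ |x - y| :=
        fun x hx y hy => hsep x (Finset.mem_of_mem_erase hx) y (Finset.mem_of_mem_erase hy)
      have key := ih _ hsub hsep' a (m - T) hmem' hne'
      rw [Finset.card_erase_of_mem hmS, Nat.cast_sub (by omega)] at key
      have hmb : m ≤ b := (hmem m hmS).2
      push_cast at key
      linarith

/-- Lemma 6 of the paper. Demand bound for a HC task in case 3: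
the carry-over job completes by `t1` and contributes only `C^L`, so the total demand
is at most `dbf^L(t1,t2) + dbf^H(t2 - t1) + C^L`. -/
theorem hc_case3_demand_bound (τ : Task) (R : Finset ℝ) (hR : ReleaseSet τ R)
    (t1 t2 : ℝ) (ht1 : 0 ≤ t1) (ht12 : t1 ≤ t2)
    (hnot1 : τ.D - τ.DL < t2 - t1) (hnot2 : ¬ case2 τ t1 t2) :
    τ.CH * ((R.filter (fun x => x + τ.D ≤ t2 ∧ t1 < x + τ.DL)).card : ℝ) +
      τ.CL * ((R.filter (fun x => x + τ.D ≤ t2 ∧ x + τ.DL ≤ t1)).card : ℝ) ≤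
      dbfL2 τ t1 t2 + dbfH τ (t2 - t1) + τ.CL := by
  obtain ⟨hpos, hsepR⟩ := hR
  have hT := τ.hT
  have hCL := τ.hCL
  have hCLCH := τ.hCLCH
  have hCLDL := τ.hCLDL
  have hDLD := τ.hDLD
  have hDT := τ.hDT
  set A := R.filter (fun x => x + τ.D ≤ t2 ∧ t1 < x + τ.DL) with hAdef
  set B := R.filter (fun x => x + τ.D ≤ t2 ∧ x + τ.DL ≤ t1) with hBdef
  set f : ℤ := ⌊(t2 - t1 - τ.D) / τ.T⌋ with hfdef
  set g : ℤ := ⌊(t2 - τ.D) / τ.T⌋ with hgdef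
  set q : ℤ := ⌊(t2 - t1) / τ.T⌋ with hqdef
  set r : ℝ := (t2 - t1) - (q : ℝ) * τ.T with hrdef
  -- basic facts about q, r
  have hr0 : 0 ≤ r := by
    have := Int.floor_le ((t2 - t1) / τ.T)
    rw [hrdef]
    have : (q : ℝ) * τ.T ≤ t2 - t1 := by
      rw [hqdef]
      calc (⌊(t2 - t1) / τ.T⌋ : ℝ) * τ.T ≤ ((t2 - t1) / τ.T) * τ.T :=
            mul_le_mul_of_nonneg_right (Int.floor_le _) hT.le
        _ = t2 - t1 := by field_simp
    linarith
  have hrT : r < τ.T := by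
    have h := Int.lt_floor_add_one ((t2 - t1) / τ.T)
    have : t2 - t1 < ((q : ℝ) + 1) * τ.T := by
      rw [hqdef]
      calc t2 - t1 = ((t2 - t1) / τ.T) * τ.T := by field_simp
        _ < ((⌊(t2 - t1) / τ.T⌋ : ℝ) + 1) * τ.T := by
            apply mul_lt_mul_of_pos_right h hT
    rw [hrdef]; linarith
  -- f ≥ -1
  have hf1 : -1 ≤ f := by
    rw [hfdef]
    apply Int.le_floor.mpr
    rw [le_div_iff₀ hT]
    push_cast
    linarith
  -- Step A : (A.card : ℤ) ≤ f + 1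
  have hAsub : A ⊆ R := Finset.filter_subset _ _
  have hAmem : ∀ x ∈ A, (0 ≤ x ∧ x + τ.D ≤ t2) ∧ t1 < x + τ.DL := by
    intro x hx
    rw [hAdef, Finset.mem_filter] at hx
    exact ⟨⟨hpos x hx.1, hx.2.1⟩, hx.2.2⟩
  have hStepA : (A.card : ℤ) ≤ f + 1 := by
    by_cases hAne : A.Nonempty
    swap
    · rw [Finset.not_nonempty_iff_eq_empty] at hAne
      rw [hAne]; simpa using (by omega : (0:ℤ) ≤ f + 1)
    · set m0 := A.min' hAne with hm0
      have hm0A : m0 ∈ A := A.min'_mem hAne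
      have hm0l : 0 ≤ m0 := (hAmem m0 hm0A).1.1
      have hm0t : t1 - τ.DL < m0 := by have := (hAmem m0 hm0A).2; linarith
      have hsepA : ∀ x ∈ A, ∀ y ∈ A, x ≠ y → τ.T ≤ |x - y| :=
        fun x hx y hy => hsepR x (hAsub hx) y (hAsub hy)
      have hmemA : ∀ x ∈ A, m0 ≤ x ∧ x ≤ t2 - τ.D := by
        intro x hx
        exact ⟨A.min'_le x hx, by have := (hAmem x hx).1.2; linarith⟩
      have hbound := sep_card_bound τ.T hT A hsepA m0 (t2 - τ.D) hmemA hAne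
      -- first: (A.card : ℤ) ≤ q + 1
      have hAq : (A.card : ℤ) ≤ q + 1 := by
        by_contra hcon
        push_neg at hcon
        have : ((q : ℝ) + 1) * τ.T ≤ ((A.card : ℝ) - 1) * τ.T := by
          apply mul_le_mul_of_nonneg_right _ hT.le
          have hcon2 : q + 2 ≤ (A.card : ℤ) := by omega
          have : (q : ℝ) + 2 ≤ (A.card : ℝ) := by exact_mod_cast hcon2
          linarith
        -- (q+1)T ≤ t2 - D - m0 < t2 - t1 - D + DL ≤ t2 - t1 < (q+1)T
        nlinarith
      by_cases hrD : τ.D ≤ r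
      · -- f = q
        have hfq : f = q := by
          rw [hfdef]
          apply Int.floor_eq_iff.mpr
          constructor
          · rw [le_div_iff₀ hT]; linarith
          · rw [div_lt_iff₀ hT]; push_cast; nlinarith
        omega
      · push_neg at hrD
        -- f = q - 1
        have hfq : f = q - 1 := by
          rw [hfdef]
          apply Int.floor_eq_iff.mpr
          constructor
          · rw [le_div_iff₀ hT]; push_cast; linarith
          · rw [div_lt_iff₀ hT]; push_cast; linarith
        -- need (A.card : ℤ) ≤ q
        have hAq' : (A.card : ℤ) ≤ q := by
          by_contra hcon
          push_neg at hcon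
          have hcard : (q : ℝ) + 1 ≤ (A.card : ℝ) := by exact_mod_cast hcon
          have hq1 : (q : ℝ) * τ.T ≤ ((A.card : ℝ) - 1) * τ.T := by
            apply mul_le_mul_of_nonneg_right _ hT.le; linarith
          -- q*T ≤ t2 - D - m0 < t2 - t1 - D + DL, so D - DL < r
          have hr1 : τ.D - τ.DL < r := by rw [hrdef]; nlinarith
          -- case 2 negation gives t2 < q*T + D
          have hmod : MOD (t2 - t1) τ.T = r := by unfold MOD; rw [hrdef, hqdef]
          simp only [case2, hmod, not_and, not_le] at hnot2
          have ht2 : t2 < (q : ℝ) * τ.T + τ.D := hnot2 hr1 hrD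
          -- but q*T ≤ t2 - D - m0 ≤ t2 - D < q*T
          nlinarith
        omega
  -- Step B : (A.card + B.card : ℤ) ≤ max 0 (g + 1)
  have hcardAB : A.card + B.card = (R.filter (fun x => x + τ.D ≤ t2)).card := by
    have hA' : A = (R.filter (fun x => x + τ.D ≤ t2)).filter (fun x => t1 < x + τ.DL) := by
      rw [hAdef, Finset.filter_filter]
    have hB' : B = (R.filter (fun x => x + τ.D ≤ t2)).filter
        (fun x => ¬ (t1 < x + τ.DL)) := by
      rw [hBdef, Finset.filter_filter]
      apply Finset.filter_congr
      intro x _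
      simp only [not_lt]
    rw [hA', hB']
    exact Finset.card_filter_add_card_filter_not _
  have hStepB : (A.card : ℤ) + B.card ≤ max 0 (g + 1) := by
    set C := R.filter (fun x => x + τ.D ≤ t2) with hCdef
    by_cases hCne : C.Nonempty
    · have hsepC : ∀ x ∈ C, ∀ y ∈ C, x ≠ y → τ.T ≤ |x - y| := fun x hx y hy =>
        hsepR x (Finset.filter_subset _ _ hx) y (Finset.filter_subset _ _ hy)
      have hmemC : ∀ x ∈ C, 0 ≤ x ∧ x ≤ t2 - τ.D := by
        intro x hx
        rw [hCdef, Finset.mem_filter] at hx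
        exact ⟨hpos x hx.1, by linarith [hx.2]⟩
      have hbound := sep_card_bound τ.T hT C hsepC 0 (t2 - τ.D) hmemC hCne
      have hCg : (C.card : ℤ) ≤ g + 1 := by
        have h1 : ((C.card : ℝ)) - 1 ≤ (t2 - τ.D) / τ.T := by
          rw [le_div_iff₀ hT]; linarith
        have h2 : (C.card : ℤ) - 1 ≤ ⌊(t2 - τ.D) / τ.T⌋ :=
          Int.le_floor.mpr (by push_cast; linarith)
        rw [← hgdef] at h2
        omega
      have : (A.card : ℤ) + B.card = (C.card : ℤ) := by exact_mod_cast hcardAB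
      omega
    · rw [Finset.not_nonempty_iff_eq_empty] at hCne
      have : (A.card : ℤ) + B.card = (C.card : ℤ) := by exact_mod_cast hcardAB
      rw [hCne] at this
      simp at this
      omega
  -- Step C : arithmetic
  have hkey : (A.card : ℤ) + B.card ≤ max 0 (g - f - 1) + f + 2 := by omega
  have h1 : ((A.card : ℝ)) + B.card ≤ (max 0 (g - f - 1) : ℤ) + (f : ℝ) + 2 := by
    exact_mod_cast hkey
  have h2 : ((A.card : ℝ)) ≤ (f : ℝ) + 1 := by exact_mod_cast hStepA
  have hmaxcast : ((max 0 (g - f - 1) : ℤ) : ℝ) = max 0 ((g : ℝ) - f - 1) := by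
    push_cast [Int.cast_max]; ring_nf
  rw [dbfL2, dbfH, ← hgdef, ← hfdef]
  have hdbfH : max 0 (((f : ℝ) + 1) * τ.CH) = ((f : ℝ) + 1) * τ.CH := by
    apply max_eq_right
    apply mul_nonneg _ (by linarith)
    have : (-1 : ℝ) ≤ (f : ℝ) := by exact_mod_cast hf1
    linarith
  rw [hdbfH]
  rw [hmaxcast] at h1
  nlinarith [mul_le_mul_of_nonneg_left h1 hCL.le,
    mul_le_mul_of_nonneg_left h2 (by linarith : (0:ℝ) ≤ τ.CH - τ.CL)]

end MC
end

section
/- Let τ be a dual-criticality task system, let 0 ≤ t1 < t2 be reals, and for each task i let R_i be a release set for it. For each i in U (the set of LC tasks together with HC tasks in case 1), let dem_i := C_i^L · |{x ∈ R_i : x + D_i^L ≤ t1}| + Σ_{x ∈ R_i with x < t1 < x + D_i^L ≤ t2} min(C_i^L, t1 − x); for each HC task i in case 2 or case 3, let dem_i := C_i^H · |{x ∈ R_i : x + D_i ≤ t2 and x + D_i^L > t1}| + C_i^L · |{x ∈ R_i : x + D_i ≤ t2 and x + D_i^L ≤ t1}|. Then Σ_i dem_i ≤ N(t1,t2). (This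 is the job-level soundness of the demand bound of Theorem 1 of the paper.) -/
/-!
Releases of one task are `T`-separated, so `x ↦ ⌊x / T⌋` (or `x ↦ ⌈(x - a) / T⌉` on a window
`(a, b]`) is injective on them, and each demand term is bounded by counting integers.

For a task in `U`, the jobs with tightened deadline by `t1` and the at most one job straddling
`t1` have distinct period indices `⌊x / T⌋`, all at most `⌊(t1 - D^L) / T⌋` unless the straddling
job is released in the period of `t1` itself; then its residual demand `min(C^L, t1 - x)` is
within `dbf^{UN}(t1, t2)`.

For an HC task in case 2 or 3, the jobs with deadline by `t2` number at most
`dbf^L(t1, t2) / C^L + dbf^H(t2 - t1) / C^H + 1`. Those still active at `t1` are released in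
`(t1 - D^L, t2 - D]`, which leaves room for at most one more than `dbf^H(t2 - t1) / C^H` of them,
and for none more outside case 2.
-/

open scoped Classical
open Finset

namespace MC

theorem _root_.Int.abs_sub_lt_one_of_ceil_eq_ceil {α : Type*} [Ring α] [LinearOrder α]
    [IsOrderedRing α] [FloorRing α] {a b : α} (h : ⌈a⌉ = ⌈b⌉) : |a - b| < 1 := by
  have := Int.abs_sub_lt_one_of_floor_eq_floor (a := -a) (b := -b)
    (by rw [Int.floor_neg, Int.floor_neg, h])
  rwa [neg_sub_neg, abs_sub_comm] at this

section Separated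

variable {T : ℝ} {S : Finset ℝ}

lemma one_le_abs_div_sub_div (hT : 0 < T) {x y : ℝ} (h : T ≤ |x - y|) : 1 ≤ |x / T - y / T| := by
  rwa [← sub_div, abs_div, abs_of_pos hT, one_le_div hT]

lemma card_le_toNat_of_floor_div_le (hT : 0 < T)
    (hS : (S : Set ℝ).Pairwise fun x y => T ≤ |x - y|) {k : ℤ}
    (hk : ∀ x ∈ S, 0 ≤ x ∧ ⌊x / T⌋ ≤ k) : #S ≤ (k + 1).toNat := by
  have := card_le_card_of_injOn (fun x => ⌊x / T⌋) (t := Icc 0 k)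
    (fun x hx => mem_Icc.2 ⟨Int.floor_nonneg.2 (div_nonneg (hk x hx).1 hT.le), (hk x hx).2⟩)
    fun x hx y hy hxy => by_contra fun hne =>
      (one_le_abs_div_sub_div hT (hS hx hy hne)).not_gt (Int.abs_sub_lt_one_of_floor_eq_floor hxy)
  simpa using this

lemma card_le_toNat_ceil_of_mem_Ioc (hT : 0 < T)
    (hS : (S : Set ℝ).Pairwise fun x y => T ≤ |x - y|) {a b : ℝ}
    (hab : ∀ x ∈ S, x ∈ Set.Ioc a b) : #S ≤ ⌈(b - a) / T⌉.toNat := by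
  have := card_le_card_of_injOn (fun x => ⌈(x - a) / T⌉) (t := Icc 1 ⌈(b - a) / T⌉)
    (fun x hx => mem_Icc.2 ⟨Int.one_le_ceil_iff.2 (div_pos (sub_pos.2 (hab x hx).1) hT),
      Int.ceil_le_ceil (by gcongr; exact (hab x hx).2)⟩)
    fun x hx y hy hxy => by_contra fun hne =>
      (one_le_abs_div_sub_div hT (by rw [sub_sub_sub_cancel_right]; exact hS hx hy hne :
        T ≤ |x - a - (y - a)|)).not_gt
        (Int.abs_sub_lt_one_of_ceil_eq_ceil hxy)
  simpa using this

end Separated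

section FloorArith

variable {T L D δ : ℝ}

lemma floor_div_sub_one_le (hT : 0 < T) (hD : D ≤ T) : ⌊L / T⌋ - 1 ≤ ⌊(L - D) / T⌋ := by
  rw [← Int.floor_sub_one]
  refine Int.floor_le_floor ?_
  rw [div_sub_one hT.ne']
  gcongr

lemma neg_one_le_floor_sub_div (hT : 0 < T) (hD : D ≤ T) (hL : 0 ≤ L) : -1 ≤ ⌊(L - D) / T⌋ := by
  have := floor_div_sub_one_le (L := L) hT hD
  have := Int.floor_nonneg.2 (div_nonneg hL hT.le)
  omega

lemma ceil_sub_div_le_floor_add_two (hT : 0 < T) (hδ : D - T ≤ δ) :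
    ⌈(L - δ) / T⌉ ≤ ⌊(L - D) / T⌋ + 2 := by
  have h := Int.lt_floor_add_one ((L - D) / T)
  have : (L - δ) / T ≤ (L - D + T) / T := by
    gcongr
    linarith
  rw [add_div, div_self hT.ne'] at this
  exact Int.ceil_le.2 (by push_cast; linarith)

lemma ceil_sub_div_le_floor_add_one (hT : 0 < T) (hδ : 0 ≤ δ) (hD : D ≤ T)
    (h : MOD L T ≤ δ ∨ D ≤ MOD L T) : ⌈(L - δ) / T⌉ ≤ ⌊(L - D) / T⌋ + 1 := by
  rcases h with h | h
  · have : ⌈(L - δ) / T⌉ ≤ ⌊L / T⌋ :=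
      Int.ceil_le.2 ((div_le_iff₀ hT).2 (by unfold MOD at h; linarith))
    have := floor_div_sub_one_le (L := L) hT hD
    omega
  · have : ⌈(L - δ) / T⌉ ≤ ⌊L / T⌋ + 1 := by
      refine Int.ceil_le.2 ((div_le_iff₀ hT).2 ?_)
      have := (div_lt_iff₀ hT).1 (Int.lt_floor_add_one (L / T))
      push_cast
      linarith
    have : ⌊L / T⌋ ≤ ⌊(L - D) / T⌋ :=
      Int.le_floor.2 ((le_div_iff₀ hT).2 (by unfold MOD at h; linarith))
    omega

lemma floor_sub_div_le_of_lt (hT : 0 < T) (hD : D ≤ T) {t : ℝ} (h : t - D < ⌊L / T⌋ * T) :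
    ⌊(t - D) / T⌋ ≤ ⌊(L - D) / T⌋ := by
  have := Int.floor_lt.2 ((div_lt_iff₀ hT).2 h)
  have := floor_div_sub_one_le (L := L) hT hD
  omega

lemma MOD_nonneg (hT : 0 < T) (t : ℝ) : 0 ≤ MOD t T :=
  sub_nonneg.2 ((le_div_iff₀ hT).1 (Int.floor_le _))

end FloorArith

namespace ReleaseSet

variable {τ : Task} {R : Finset ℝ}

lemma pairwise (hR : ReleaseSet τ R) {S : Finset ℝ} (hS : S ⊆ R) :
    (S : Set ℝ).Pairwise fun x y => τ.T ≤ |x - y| :=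
  fun x hx y hy => hR.2 x (hS hx) y (hS hy)

lemma eq_of_abs_sub_lt (hR : ReleaseSet τ R) {x y : ℝ} (hx : x ∈ R) (hy : y ∈ R)
    (h : |x - y| < τ.T) : x = y :=
  by_contra fun hne => (hR.2 x hx y hy hne).not_gt h

lemma card_le_of_floor_div_le (hR : ReleaseSet τ R) {S : Finset ℝ} (hS : S ⊆ R) {k : ℤ}
    (hk : ∀ x ∈ S, ⌊x / τ.T⌋ ≤ k) : #S ≤ (k + 1).toNat :=
  card_le_toNat_of_floor_div_le τ.hT (hR.pairwise hS) fun x hx => ⟨hR.1 x (hS hx), hk x hx⟩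

end ReleaseSet

lemma dbfL_eq_toNat_mul (τ : Task) (t : ℝ) :
    dbfL τ t = ((⌊(t - τ.DL) / τ.T⌋ + 1).toNat : ℝ) * τ.CL := by
  have : (((⌊(t - τ.DL) / τ.T⌋ + 1).toNat : ℤ) : ℝ) = max ((⌊(t - τ.DL) / τ.T⌋ : ℝ) + 1) 0 := by
    rw [Int.toNat_eq_max]; push_cast; rfl
  rw [dbfL, ← Int.cast_natCast, this, max_mul_of_nonneg _ _ τ.hCL.le, zero_mul, max_comm]

lemma dbfH_eq_of_nonneg (τ : Task) {t : ℝ} (ht : 0 ≤ t) :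
    dbfH τ t = ((⌊(t - τ.D) / τ.T⌋ : ℝ) + 1) * τ.CH := by
  have : (-1 : ℝ) ≤ ⌊(t - τ.D) / τ.T⌋ := by exact_mod_cast neg_one_le_floor_sub_div τ.hT τ.hDT ht
  exact max_eq_right (mul_nonneg (by linarith) (τ.hCL.le.trans τ.hCLCH))

lemma dbfUN_nonneg (τ : Task) (t1 t2 : ℝ) : 0 ≤ dbfUN τ t1 t2 := by
  unfold dbfUN
  split_ifs
  exacts [le_min τ.hCL.le (MOD_nonneg τ.hT t1), le_rfl]

lemma min_le_dbfUN (τ : Task) {t1 t2 x : ℝ} (hxt1 : x < t1) (hxt2 : x + τ.DL ≤ t2)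
    (hx : ⌊(t1 - τ.DL) / τ.T⌋ < ⌊x / τ.T⌋) : min τ.CL (t1 - x) ≤ dbfUN τ t1 t2 := by
  have hxF : ⌊x / τ.T⌋ ≤ ⌊t1 / τ.T⌋ :=
    Int.floor_le_floor (div_le_div_of_nonneg_right hxt1.le τ.hT.le)
  have hKF := floor_div_sub_one_le (L := t1) τ.hT (τ.hDLD.trans τ.hDT)
  have hFx : (⌊t1 / τ.T⌋ : ℝ) * τ.T ≤ x := (le_div_iff₀ τ.hT).1 (Int.le_floor.1 (by omega))
  have hDL : t1 - τ.DL < ⌊t1 / τ.T⌋ * τ.T := (div_lt_iff₀ τ.hT).1 (Int.floor_lt.1 (by omega))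
  rw [dbfUN, if_pos ⟨by unfold MOD; linarith, by linarith⟩]
  exact min_le_min_left _ (by unfold MOD; linarith)

lemma demand_le_dbfL_add_dbfUN {τ : Task} {R : Finset ℝ} (hR : ReleaseSet τ R) (t1 t2 : ℝ) :
    τ.CL * (#(R.filter fun x => x + τ.DL ≤ t1) : ℝ) +
        ∑ x ∈ R.filter (fun x => x < t1 ∧ t1 < x + τ.DL ∧ x + τ.DL ≤ t2), min τ.CL (t1 - x) ≤
      dbfL τ t1 + dbfUN τ t1 t2 := by
  set B := R.filter fun x => x + τ.DL ≤ t1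
  set C := R.filter fun x => x < t1 ∧ t1 < x + τ.DL ∧ x + τ.DL ≤ t2
  set K := ⌊(t1 - τ.DL) / τ.T⌋
  have hB : ∀ x ∈ B, ⌊x / τ.T⌋ ≤ K := fun x hx =>
    Int.floor_le_floor (div_le_div_of_nonneg_right (by linarith [(mem_filter.1 hx).2]) τ.hT.le)
  rw [dbfL_eq_toNat_mul]
  by_cases hC : ∀ x ∈ C, ⌊x / τ.T⌋ ≤ K
  · have hdisj : Disjoint B C := disjoint_filter.2 fun x _ h1 h2 => h2.2.1.not_ge h1
    have hcard : #B + #C ≤ (K + 1).toNat := by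
      rw [← card_union_of_disjoint hdisj]
      exact hR.card_le_of_floor_div_le (union_subset (filter_subset _ _) (filter_subset _ _))
        fun x hx => (mem_union.1 hx).elim (hB x) (hC x)
    have hsum : ∑ x ∈ C, min τ.CL (t1 - x) ≤ #C * τ.CL := by
      simpa using sum_le_card_nsmul C _ τ.CL fun x _ => min_le_left _ _
    have : (#B : ℝ) + #C ≤ (K + 1).toNat := by exact_mod_cast hcard
    linarith [dbfUN_nonneg τ t1 t2, mul_le_mul_of_nonneg_left this τ.hCL.le]
  · push Not at hC
    obtain ⟨x, hx, hxK⟩ := hC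
    obtain ⟨hxR, hxt1, hxDL, hxt2⟩ := mem_filter.1 hx
    have hCx : C = {x} := eq_singleton_iff_unique_mem.2 ⟨hx, fun y hy => by
      obtain ⟨hyR, hyt1, hyDL, -⟩ := mem_filter.1 hy
      exact hR.eq_of_abs_sub_lt hyR hxR
        (abs_sub_lt_iff.2 ⟨by linarith [τ.hDLD.trans τ.hDT], by linarith [τ.hDLD.trans τ.hDT]⟩)⟩
    have hBcard : (#B : ℝ) ≤ (K + 1).toNat := by
      exact_mod_cast hR.card_le_of_floor_div_le (filter_subset _ _) hB
    rw [hCx, sum_singleton, mul_comm]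
    exact add_le_add (by gcongr; exact τ.hCL.le) (min_le_dbfUN τ hxt1 hxt2 hxK)

section HighCriticality

variable {τ : Task} {R : Finset ℝ} {t1 t2 : ℝ}

/-- The last summand is the `C^H - C^L` surplus of the jobs still active at `t1` beyond the
`dbf^H(t2 - t1) / C^H` of them that `dbf^H` already pays for in full. -/
lemma hc_demand_le (hR : ReleaseSet τ R) (ht : t1 ≤ t2) :
    τ.CH * (#(R.filter fun x => x + τ.D ≤ t2 ∧ t1 < x + τ.DL) : ℝ) +
        τ.CL * (#(R.filter fun x => x + τ.D ≤ t2 ∧ x + τ.DL ≤ t1) : ℝ) ≤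
      dbfL2 τ t1 t2 + dbfH τ (t2 - t1) + τ.CL +
        (τ.CH - τ.CL) * (#(R.filter fun x => x + τ.D ≤ t2 ∧ t1 < x + τ.DL) -
          ((⌊(t2 - t1 - τ.D) / τ.T⌋ : ℝ) + 1)) := by
  set A := R.filter fun x => x + τ.D ≤ t2 ∧ t1 < x + τ.DL
  set B := R.filter fun x => x + τ.D ≤ t2 ∧ x + τ.DL ≤ t1
  set f1 := ⌊(t2 - t1 - τ.D) / τ.T⌋
  set f2 := ⌊(t2 - τ.D) / τ.T⌋
  have hdisj : Disjoint A B := disjoint_filter.2 fun x _ h1 h2 => h1.2.not_ge h2.2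
  have hAB : #A + #B ≤ (f2 + 1).toNat := by
    rw [← card_union_of_disjoint hdisj]
    refine hR.card_le_of_floor_div_le (union_subset (filter_subset _ _) (filter_subset _ _))
      fun x hx => Int.floor_le_floor (div_le_div_of_nonneg_right ?_ τ.hT.le)
    rcases mem_union.1 hx with hx | hx <;> linarith [(mem_filter.1 hx).2.1]
  have hf1 : -1 ≤ f1 := neg_one_le_floor_sub_div τ.hT τ.hDT (sub_nonneg.2 ht)
  have hABz : ((#A + #B : ℕ) : ℤ) ≤ max 0 (f2 - f1 - 1) + (f1 + 1) + 1 := by omega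
  have hABr : (#A : ℝ) + #B ≤ max 0 ((f2 : ℝ) - f1 - 1) + (f1 + 1) + 1 := by
    exact_mod_cast hABz
  rw [dbfH_eq_of_nonneg τ (sub_nonneg.2 ht), dbfL2]
  linarith [mul_le_mul_of_nonneg_left hABr τ.hCL.le]

lemma card_filter_le_toNat_ceil (hR : ReleaseSet τ R) :
    #(R.filter fun x => x + τ.D ≤ t2 ∧ t1 < x + τ.DL) ≤
      ⌈(t2 - t1 - (τ.D - τ.DL)) / τ.T⌉.toNat := by
  rw [show t2 - t1 - (τ.D - τ.DL) = t2 - τ.D - (t1 - τ.DL) by ring]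
  exact card_le_toNat_ceil_of_mem_Ioc τ.hT (hR.pairwise (filter_subset _ _)) fun x hx => by
    obtain ⟨-, hxD, hxDL⟩ := mem_filter.1 hx
    exact ⟨by linarith, by linarith⟩

lemma card_filter_le_floor_add_two (hR : ReleaseSet τ R) (ht : t1 ≤ t2) :
    (#(R.filter fun x => x + τ.D ≤ t2 ∧ t1 < x + τ.DL) : ℤ) ≤
      ⌊(t2 - t1 - τ.D) / τ.T⌋ + 2 := by
  have := card_filter_le_toNat_ceil hR (t1 := t1) (t2 := t2)
  have := ceil_sub_div_le_floor_add_two (L := t2 - t1) (D := τ.D) (δ := τ.D - τ.DL) τ.hT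
    (by linarith [τ.hDT, τ.hDLD.trans τ.hDT])
  have := neg_one_le_floor_sub_div τ.hT τ.hDT (sub_nonneg.2 ht)
  omega

lemma card_filter_le_floor_add_one_of_not_case2 (hR : ReleaseSet τ R) (ht : t1 ≤ t2)
    (h2 : ¬ case2 τ t1 t2) :
    (#(R.filter fun x => x + τ.D ≤ t2 ∧ t1 < x + τ.DL) : ℤ) ≤
      ⌊(t2 - t1 - τ.D) / τ.T⌋ + 1 := by
  set A := R.filter fun x => x + τ.D ≤ t2 ∧ t1 < x + τ.DL
  by_cases hM : τ.D - τ.DL < MOD (t2 - t1) τ.T ∧ MOD (t2 - t1) τ.T < τ.D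
  · have ht2 : t2 - τ.D < ⌊(t2 - t1) / τ.T⌋ * τ.T := by
      by_contra h
      exact h2 ⟨hM.1, hM.2, by linarith⟩
    have hA := hR.card_le_of_floor_div_le (S := A) (filter_subset _ _) (k := ⌊(t2 - τ.D) / τ.T⌋)
      fun x hx => Int.floor_le_floor
        (div_le_div_of_nonneg_right (by linarith [(mem_filter.1 hx).2.1]) τ.hT.le)
    have := floor_sub_div_le_of_lt τ.hT τ.hDT ht2
    have := neg_one_le_floor_sub_div τ.hT τ.hDT (sub_nonneg.2 ht)
    omega
  · have : #A ≤ _ := card_filter_le_toNat_ceil hR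
    have := ceil_sub_div_le_floor_add_one (L := t2 - t1) (δ := τ.D - τ.DL) τ.hT
      (sub_nonneg.2 τ.hDLD) τ.hDT (by rw [not_and_or, not_lt, not_lt] at hM; exact hM)
    have := neg_one_le_floor_sub_div τ.hT τ.hDT (sub_nonneg.2 ht)
    omega

lemma hc_demand_le_add_CH (hR : ReleaseSet τ R) (ht : t1 ≤ t2) :
    τ.CH * (#(R.filter fun x => x + τ.D ≤ t2 ∧ t1 < x + τ.DL) : ℝ) +
        τ.CL * (#(R.filter fun x => x + τ.D ≤ t2 ∧ x + τ.DL ≤ t1) : ℝ) ≤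
      dbfL2 τ t1 t2 + dbfH τ (t2 - t1) + τ.CH := by
  have hA : (#(R.filter fun x => x + τ.D ≤ t2 ∧ t1 < x + τ.DL) : ℝ) ≤
      (⌊(t2 - t1 - τ.D) / τ.T⌋ : ℝ) + 1 + 1 := by
    exact_mod_cast (card_filter_le_floor_add_two hR ht).trans_eq (by ring)
  linarith [hc_demand_le hR ht, mul_le_mul_of_nonneg_left hA (sub_nonneg.2 τ.hCLCH)]

lemma hc_demand_le_add_CL_of_not_case2 (hR : ReleaseSet τ R) (ht : t1 ≤ t2)
    (h2 : ¬ case2 τ t1 t2) :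
    τ.CH * (#(R.filter fun x => x + τ.D ≤ t2 ∧ t1 < x + τ.DL) : ℝ) +
        τ.CL * (#(R.filter fun x => x + τ.D ≤ t2 ∧ x + τ.DL ≤ t1) : ℝ) ≤
      dbfL2 τ t1 t2 + dbfH τ (t2 - t1) + τ.CL := by
  have hA : (#(R.filter fun x => x + τ.D ≤ t2 ∧ t1 < x + τ.DL) : ℝ) ≤
      (⌊(t2 - t1 - τ.D) / τ.T⌋ : ℝ) + 1 := by
    exact_mod_cast card_filter_le_floor_add_one_of_not_case2 hR ht h2
  linarith [hc_demand_le hR ht, mul_le_mul_of_nonneg_left hA (sub_nonneg.2 τ.hCLCH)]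

end HighCriticality

theorem new_test_demand_sound_general {n : ℕ} (τ : Fin n → Task) (hc : Fin n → Bool)
    (t1 t2 : ℝ) (ht12 : t1 < t2)
    (R : Fin n → Finset ℝ) (hR : ∀ i, ReleaseSet (τ i) (R i)) :
    (∑ i ∈ Uset τ hc t1 t2,
        ((τ i).CL * (((R i).filter (fun x => x + (τ i).DL ≤ t1)).card : ℝ) +
          ∑ x ∈ (R i).filter
              (fun x => x < t1 ∧ t1 < x + (τ i).DL ∧ x + (τ i).DL ≤ t2),
            min (τ i).CL (t1 - x))) +
      (∑ i ∈ H2set τ hc t1 t2 ∪ H3set τ hc t1 t2,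
        ((τ i).CH *
            (((R i).filter (fun x => x + (τ i).D ≤ t2 ∧ t1 < x + (τ i).DL)).card : ℝ) +
          (τ i).CL *
            (((R i).filter (fun x => x + (τ i).D ≤ t2 ∧ x + (τ i).DL ≤ t1)).card : ℝ))) ≤
      Ntest τ hc t1 t2 := by
  have hdisj : Disjoint (H2set τ hc t1 t2) (H3set τ hc t1 t2) :=
    disjoint_filter.2 fun i _ h2 h3 => h3.2.2 h2.2
  rw [sum_union hdisj, Ntest, ← add_assoc]
  refine add_le_add_three (sum_le_sum fun i _ => ?_) (sum_le_sum fun i _ => ?_)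
    (sum_le_sum fun i hi => ?_)
  · exact demand_le_dbfL_add_dbfUN (hR i) t1 t2
  · exact hc_demand_le_add_CH (hR i) ht12.le
  · exact hc_demand_le_add_CL_of_not_case2 (hR i) ht12.le (mem_filter.1 hi).2.2.2

/-- job-level soundness of the demand bound of Theorem 1 of the
paper. Summing, over all tasks, the job-level demand (unnecessary-job style demand
for LC tasks and HC tasks in case 1; criticality-split demand for HC tasks in case 2
or 3) yields at most the new-test bound `N(t1,t2)`. -/
theorem new_test_demand_sound {n : ℕ} (τ : Fin n → Task) (hc : Fin n → Bool)
    (hLC : ∀ i, hc i = false → (τ i).CL = (τ i).CH ∧ (τ i).DL = (τ i).D)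
    (t1 t2 : ℝ) (ht1 : 0 ≤ t1) (ht12 : t1 < t2)
    (R : Fin n → Finset ℝ) (hR : ∀ i, ReleaseSet (τ i) (R i)) :
    (∑ i ∈ Uset τ hc t1 t2,
        ((τ i).CL * (((R i).filter (fun x => x + (τ i).DL ≤ t1)).card : ℝ) +
          ∑ x ∈ (R i).filter
              (fun x => x < t1 ∧ t1 < x + (τ i).DL ∧ x + (τ i).DL ≤ t2),
            min (τ i).CL (t1 - x))) +
      (∑ i ∈ H2set τ hc t1 t2 ∪ H3set τ hc t1 t2,
        ((τ i).CH *
            (((R i).filter (fun x => x + (τ i).D ≤ t2 ∧ t1 < x + (τ i).DL)).card : ℝ) +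
          (τ i).CL *
            (((R i).filter (fun x => x + (τ i).D ≤ t2 ∧ x + (τ i).DL ≤ t1)).card : ℝ))) ≤
      Ntest τ hc t1 t2 :=
  new_test_demand_sound_general τ hc t1 t2 ht12 R hR

end MC
end
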